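/- arXiv:2501.11210 — 3 statements merged into one kernel-verified Lean document; each statement's English description precedes it below -/
import Mathlib

section
/- In the Bernoulli mixture setting, for μ-almost every (θ, x) in [0,1] × {0,1}^ℕ, the empirical frequencies fₙ(x) = (1/n)∑_{i<n} x(i) converge to θ. More precisely, if for some n₀ the bound |∑_{i<n²}(x(i) − θ)| ≤ n^{5/3} holds for all n ≥ n₀, then for all m ≥ n₀², |(1/m)∑_{i<m} x(i) − θ| ≤ m^{−1/6} + 2·m^{−1/2} + m^{−1}. -/
open MeasureTheory ProbabilityTheory Filter Topology Finset
open scoped ENNReal ProbabilityTheory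

lemma det9 (θ : ℝ) (hθ : θ ∈ Set.Icc (0:ℝ) 1) (x : ℕ → Bool) (n₀ : ℕ) (hn₀ : 1 ≤ n₀)
    (H : ∀ n, n₀ ≤ n →
      |∑ i ∈ Finset.range (n ^ 2), ((if x i then (1:ℝ) else 0) - θ)| ≤ (n : ℝ) ^ ((5:ℝ)/3)) :
    ∀ m, n₀ ^ 2 ≤ m →
      |(∑ i ∈ Finset.range m, if x i then (1:ℝ) else 0) / m - θ|
        ≤ (m : ℝ) ^ (-(1:ℝ)/6) + 2 * (m : ℝ) ^ (-(1:ℝ)/2) + (m : ℝ)⁻¹ := by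
  obtain ⟨hθ0, hθ1⟩ := hθ
  intro m hm
  set n := Nat.sqrt m with hn
  have hn2 : n ^ 2 ≤ m := by simpa [pow_two] using Nat.sqrt_le' m
  have hmn : m < (n+1) ^ 2 := by simpa [pow_two] using Nat.lt_succ_sqrt' m
  have hn₀n : n₀ ≤ n := by
    rw [hn, Nat.le_sqrt']
    exact hm
  have hm1 : 1 ≤ m := le_trans (Nat.one_le_pow _ _ (by omega)) hm
  have hn1 : 1 ≤ n := le_trans hn₀ hn₀n
  have hmR : (0:ℝ) < m := by exact_mod_cast hm1
  set g : ℕ → ℝ := fun i => (if x i then (1:ℝ) else 0) - θ with hg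
  -- rewrite LHS
  have key : (∑ i ∈ Finset.range m, if x i then (1:ℝ) else 0) / m - θ
      = (∑ i ∈ Finset.range m, g i) / m := by
    rw [hg]
    rw [Finset.sum_sub_distrib, Finset.sum_const, Finset.card_range]
    field_simp
    rw [nsmul_eq_mul]
  rw [key]
  -- bound the sum
  have habs1 : |g| = fun i => |g i| := rfl
  have hsplit : ∑ i ∈ Finset.range m, g i
      = (∑ i ∈ Finset.range (n^2), g i) + ∑ i ∈ Finset.Ico (n^2) m, g i := by
    rw [Finset.range_eq_Ico, Finset.range_eq_Ico]
    exact (Finset.sum_Ico_consecutive _ (Nat.zero_le _) hn2).symm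
  have hgb : ∀ i, |g i| ≤ 1 := by
    intro i
    rw [hg]
    dsimp only
    split <;> rw [abs_le] <;> constructor <;> linarith
  have htail : |∑ i ∈ Finset.Ico (n^2) m, g i| ≤ 2 * (n:ℝ) := by
    calc |∑ i ∈ Finset.Ico (n^2) m, g i| ≤ ∑ i ∈ Finset.Ico (n^2) m, |g i| :=
        Finset.abs_sum_le_sum_abs _ _
    _ ≤ ∑ i ∈ Finset.Ico (n^2) m, (1:ℝ) := Finset.sum_le_sum (fun i _ => hgb i)
    _ = ((m - n^2 : ℕ) : ℝ) := by rw [Finset.sum_const, Nat.card_Ico]; simp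
    _ ≤ 2 * (n:ℝ) := by
        have hle : m ≤ 2 * n + n ^ 2 := by
          have h' : m < n^2 + 2*n + 1 := by
            calc m < (n+1)^2 := hmn
            _ = n^2 + 2*n + 1 := by ring
          linarith
        have : m - n^2 ≤ 2 * n := Nat.sub_le_iff_le_add.mpr hle
        exact_mod_cast this
  have hmain : |∑ i ∈ Finset.range m, g i| ≤ (n:ℝ) ^ ((5:ℝ)/3) + 2 * (n:ℝ) := by
    rw [hsplit]
    calc |(∑ i ∈ Finset.range (n^2), g i) + ∑ i ∈ Finset.Ico (n^2) m, g i|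
        ≤ |∑ i ∈ Finset.range (n^2), g i| + |∑ i ∈ Finset.Ico (n^2) m, g i| := abs_add_le _ _
    _ ≤ (n:ℝ) ^ ((5:ℝ)/3) + 2 * (n:ℝ) := add_le_add (H n hn₀n) htail
  -- relate n to m
  have hnm : (n:ℝ) ≤ (m:ℝ) ^ ((1:ℝ)/2) := by
    have h2 : ((n:ℝ)) ^ (2:ℕ) ≤ (m:ℝ) := by exact_mod_cast hn2
    calc (n:ℝ) = (((n:ℝ) ^ (2:ℕ)) : ℝ) ^ ((1:ℝ)/2) := by
          rw [← Real.rpow_natCast (n:ℝ) 2, ← Real.rpow_mul (Nat.cast_nonneg n)]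
          norm_num
    _ ≤ (m:ℝ) ^ ((1:ℝ)/2) := Real.rpow_le_rpow (by positivity) h2 (by norm_num)
  have hn53 : (n:ℝ) ^ ((5:ℝ)/3) ≤ (m:ℝ) ^ ((5:ℝ)/6) := by
    calc (n:ℝ) ^ ((5:ℝ)/3) ≤ ((m:ℝ) ^ ((1:ℝ)/2)) ^ ((5:ℝ)/3) :=
        Real.rpow_le_rpow (Nat.cast_nonneg n) hnm (by norm_num)
    _ = (m:ℝ) ^ ((5:ℝ)/6) := by
        rw [← Real.rpow_mul (le_of_lt hmR)]; norm_num
  have hfin : |∑ i ∈ Finset.range m, g i| / m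
      ≤ (m : ℝ) ^ (-(1:ℝ)/6) + 2 * (m : ℝ) ^ (-(1:ℝ)/2) := by
    have h1 : |∑ i ∈ Finset.range m, g i| / m
        ≤ ((m:ℝ) ^ ((5:ℝ)/6) + 2 * (m:ℝ) ^ ((1:ℝ)/2)) / m := by
      gcongr
      exact hmain.trans (add_le_add hn53 (by linarith))
    have e1 : (m:ℝ) ^ (-(1:ℝ)/6) = (m:ℝ)^((5:ℝ)/6) / m := by
      rw [show (-(1:ℝ)/6) = (5:ℝ)/6 - 1 by norm_num, Real.rpow_sub hmR, Real.rpow_one]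
    have e2 : (m:ℝ) ^ (-(1:ℝ)/2) = (m:ℝ)^((1:ℝ)/2) / m := by
      rw [show (-(1:ℝ)/2) = (1:ℝ)/2 - 1 by norm_num, Real.rpow_sub hmR, Real.rpow_one]
    refine h1.trans (le_of_eq ?_)
    rw [e1, e2]; ring
  rw [abs_div, abs_of_pos hmR]
  have : (0:ℝ) < (m:ℝ)⁻¹ := by positivity
  linarith [hfin]

lemma slln9
    (P : Kernel (Set.Icc (0:ℝ) 1) (ℕ → Bool)) [IsMarkovKernel P]
    (hP : ∀ (θ : Set.Icc (0:ℝ) 1) (s : Finset ℕ) (y : ℕ → Bool),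
      P θ {x | ∀ i ∈ s, x i = y i}
        = ∏ i ∈ s, if y i then ENNReal.ofReal (θ : ℝ) else ENNReal.ofReal (1 - (θ : ℝ)))
    (θ : Set.Icc (0:ℝ) 1) :
    ∀ᵐ x ∂(P θ), Tendsto
      (fun n : ℕ => (∑ i ∈ Finset.range n, if x i then (1:ℝ) else 0) / (n:ℝ)) atTop
      (𝓝 (θ : ℝ)) := by
  set μ := P θ with hμ
  set A : ℕ → Set (ℕ → Bool) := fun i => {x | x i = true} with hA
  have hAm : ∀ i, MeasurableSet (A i) := by
    intro i
    have h : A i = (fun x : ℕ → Bool => x i) ⁻¹' {true} := rfl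
    rw [h]
    exact (measurable_pi_apply i) (measurableSet_singleton true)
  have h1 : ∀ s : Finset ℕ, μ (⋂ i ∈ s, A i) = ∏ _i ∈ s, ENNReal.ofReal (θ:ℝ) := by
    intro s
    have h := hP θ s (fun _ => true)
    have hset : {x : ℕ → Bool | ∀ i ∈ s, x i = true} = ⋂ i ∈ s, A i := by
      ext x; simp [hA]
    rw [hset] at h
    simpa using h
  have hAmeas : ∀ i, μ (A i) = ENNReal.ofReal (θ:ℝ) := by
    intro i
    have := h1 {i}
    simpa using this
  have hindepSet : iIndepSet A μ := by
    rw [iIndepSet_iff_meas_biInter hAm]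
    intro s
    rw [h1 s]
    exact Finset.prod_congr rfl fun i _ => (hAmeas i).symm
  set X : ℕ → (ℕ → Bool) → ℝ := fun i => (A i).indicator (fun _ => (1:ℝ)) with hX
  have hiInd : iIndepFun X μ := hindepSet.iIndepFun_indicator
  have hXm : ∀ i, Measurable (X i) := fun i => (measurable_const (a := (1:ℝ))).indicator (hAm i)
  have hpair : Pairwise (Function.onFun (IndepFun · · μ) X) := fun i j hij => hiInd.indepFun hij
  set u : Bool → ℝ := fun b => if b then (1:ℝ) else 0 with hu
  have hXu : ∀ i, X i = u ∘ (fun x => x i) := by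
    intro i; funext x
    simp [hX, hu, Set.indicator_apply, hA]
  have hident : ∀ i, IdentDistrib (X i) (X 0) μ μ := by
    intro i
    have he : IdentDistrib (fun x : ℕ → Bool => x i) (fun x : ℕ → Bool => x 0) μ μ := by
      refine ⟨(measurable_pi_apply i).aemeasurable, (measurable_pi_apply 0).aemeasurable, ?_⟩
      refine Measure.ext_iff_singleton.mpr fun b => ?_
      rw [Measure.map_apply (measurable_pi_apply i) (measurableSet_singleton b),
        Measure.map_apply (measurable_pi_apply 0) (measurableSet_singleton b)]
      have hb : ∀ k, μ ((fun x : ℕ → Bool => x k) ⁻¹' {b})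
          = if b then ENNReal.ofReal (θ:ℝ) else ENNReal.ofReal (1 - (θ:ℝ)) := by
        intro k
        have h := hP θ {k} (fun _ => b)
        have hset : {x : ℕ → Bool | ∀ j ∈ ({k} : Finset ℕ), x j = b}
            = (fun x : ℕ → Bool => x k) ⁻¹' {b} := by
          ext x; simp
        rw [hset] at h
        simpa using h
      rw [hb i, hb 0]
    have := he.comp (u := u) measurable_from_top
    rw [← hXu i, ← hXu 0] at this
    exact this
  have hint : Integrable (X 0) μ := (integrable_const (1:ℝ)).indicator (hAm 0)
  have hexp : μ[X 0] = (θ:ℝ) := by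
    rw [hX]
    rw [integral_indicator_const (1:ℝ) (hAm 0), measureReal_def, hAmeas 0, smul_eq_mul, mul_one,
      ENNReal.toReal_ofReal θ.2.1]
  have SL := strong_law_ae X hint hpair hident
  rw [hexp] at SL
  filter_upwards [SL] with x hx
  have he : (fun n : ℕ => (∑ i ∈ Finset.range n, if x i then (1:ℝ) else 0) / (n:ℝ))
      = fun n : ℕ => (n:ℝ)⁻¹ • ∑ i ∈ Finset.range n, X i x := by
    funext n
    simp [hXu, hu, smul_eq_mul, div_eq_inv_mul]
  rw [he]
  exact hx

theorem stmt9
    (p : Measure (Set.Icc (0:ℝ) 1)) [IsProbabilityMeasure p]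
    (P : Kernel (Set.Icc (0:ℝ) 1) (ℕ → Bool)) [IsMarkovKernel P]
    (hP : ∀ (θ : Set.Icc (0:ℝ) 1) (s : Finset ℕ) (y : ℕ → Bool),
      P θ {x | ∀ i ∈ s, x i = y i}
        = ∏ i ∈ s, if y i then ENNReal.ofReal (θ : ℝ) else ENNReal.ofReal (1 - (θ : ℝ)))
    (f : ℕ → (ℕ → Bool) → ℝ)
    (hf : ∀ n x, f n x = (∑ i ∈ Finset.range n, if x i then (1:ℝ) else 0) / n) :
    (∀ᵐ z ∂(p ⊗ₘ P), Tendsto (fun n => f n z.2) atTop (𝓝 (z.1 : ℝ))) ∧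
    (∀ θ : ℝ, θ ∈ Set.Icc (0:ℝ) 1 → ∀ (x : ℕ → Bool) (n₀ : ℕ), 1 ≤ n₀ →
      (∀ n, n₀ ≤ n →
        |∑ i ∈ Finset.range (n ^ 2), ((if x i then (1:ℝ) else 0) - θ)| ≤ (n : ℝ) ^ ((5:ℝ)/3)) →
      ∀ m, n₀ ^ 2 ≤ m →
        |(∑ i ∈ Finset.range m, if x i then (1:ℝ) else 0) / m - θ|
          ≤ (m : ℝ) ^ (-(1:ℝ)/6) + 2 * (m : ℝ) ^ (-(1:ℝ)/2) + (m : ℝ)⁻¹) := by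
  constructor
  · have hfm : ∀ n, Measurable fun z : Set.Icc (0:ℝ) 1 × (ℕ → Bool) => f n z.2 := by
      intro n
      have e : (fun z : Set.Icc (0:ℝ) 1 × (ℕ → Bool) => f n z.2)
          = fun z => (∑ i ∈ Finset.range n, if z.2 i then (1:ℝ) else 0) / (n:ℝ) :=
        funext fun z => hf n z.2
      rw [e]
      refine Measurable.div_const ?_ _
      refine Finset.measurable_sum _ (fun i _ => ?_)
      exact (measurable_from_top (f := fun b : Bool => if b then (1:ℝ) else 0)).comp
        ((measurable_pi_apply i).comp measurable_snd)
    have hmeas : MeasurableSet {z : Set.Icc (0:ℝ) 1 × (ℕ → Bool) |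
        Tendsto (fun n => f n z.2) atTop (𝓝 (z.1 : ℝ))} :=
      measurableSet_tendsto_fun hfm (measurable_subtype_coe.comp measurable_fst)
    refine Measure.ae_compProd_of_ae_ae hmeas ?_
    refine ae_of_all _ fun θ => ?_
    filter_upwards [slln9 P hP θ] with x hx
    have e : (fun n => f n x)
        = fun n : ℕ => (∑ i ∈ Finset.range n, if x i then (1:ℝ) else 0) / (n:ℝ) :=
      funext fun n => hf n x
    show Tendsto (fun n => f n x) atTop (𝓝 (θ:ℝ))
    rw [e]
    exact hx
  · intro θ hθ x n₀ hn₀ H m hm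
    exact det9 θ hθ x n₀ hn₀ H m hm
end

section
/- Let the parameter space be 𝕊_∞, the sample space ℕ^ℕ, and P_θ the i.i.d. product of θ. Let p = ∑_{j=1}^m q_j δ_{θ_j} with q_j > 0, ∑ q_j = 1, θ₁ having all coordinates positive, and each θ_j for j ≥ 2 having some zero coordinate. Then for P_{θ₀}-almost every x (for any θ₀ with all coordinates positive), the posteriors p(· | x↾n) converge weakly to δ_{θ₁}. -/
open MeasureTheory Filter Topology
open scoped ENNReal

/-- The cylinder `[x↾n]` of sequences agreeing with `x` on the first `n` coordinates. -/
def cyl (x : ℕ → ℕ) (n : ℕ) : Set (ℕ → ℕ) := {y | ∀ i < n, y i = x i}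

/-- The posterior `p(· ∣ x↾n)` for the finite mixture prior `p = ∑ⱼ qⱼ δ_{θⱼ}`:
`p(A ∣ σ) = (∑ⱼ qⱼ 𝟙_A(θⱼ) P_{θⱼ}(σ)) / (∑ⱼ qⱼ P_{θⱼ}(σ))`, the zero measure when the
denominator vanishes. -/
noncomputable def postMix (m : ℕ) (q : Fin (m + 1) → ℝ) (θs : Fin (m + 1) → (ℕ → ℝ))
    (P : (ℕ → ℝ) → Measure (ℕ → ℕ)) (x : ℕ → ℕ) (n : ℕ) : Measure (ℕ → ℝ) :=
  (∑ j, ENNReal.ofReal (q j) * P (θs j) (cyl x n))⁻¹ •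
    Measure.sum (fun j : Fin (m + 1) =>
      (ENNReal.ofReal (q j) * P (θs j) (cyl x n)) • Measure.dirac (θs j))

lemma tsum_pi_prod {T : Type*} (g : T → ℝ≥0∞) :
    ∀ N : ℕ, ∑' y : Fin N → T, ∏ i, g (y i) = (∑' t, g t) ^ N := by
  intro N
  induction N with
  | zero =>
      rw [pow_zero]
      rw [tsum_eq_single (fun i => (i.elim0 : T))]
      · simp
      · intro b hb
        exact absurd (Subsingleton.elim b _) hb
  | succ N ih =>
      rw [← (Fin.consEquiv (fun _ => T)).tsum_eq (fun y : Fin (N+1) → T => ∏ i, g (y i))]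
      have : ∀ p : T × (Fin N → T),
          (∏ i, g ((Fin.consEquiv (fun _ => T)) p i)) = g p.1 * ∏ i, g (p.2 i) := by
        intro p
        simp [Fin.consEquiv, Fin.prod_univ_succ]
      rw [tsum_congr this, ENNReal.tsum_prod']
      simp_rw [ENNReal.tsum_mul_left, ENNReal.tsum_mul_right]
      rw [ih, pow_succ, mul_comm]

lemma avoid_null (μ : Measure (ℕ → ℕ))
    (θ₀ : ℕ → ℝ) (h0pos : ∀ i, 0 < θ₀ i) (h0sum : ∑' i, θ₀ i = 1)
    (hP : ∀ (s : Finset ℕ) (y : ℕ → ℕ),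
        μ {x | ∀ i ∈ s, x i = y i} = ∏ i ∈ s, ENNReal.ofReal (θ₀ (y i)))
    (i₀ : ℕ) : μ {x | ∀ n, x n ≠ i₀} = 0 := by
  set f : ℕ → ℝ≥0∞ := fun k => ENNReal.ofReal (θ₀ k) with hf
  have hsummable : Summable θ₀ := by
    by_contra h
    rw [tsum_eq_zero_of_not_summable h] at h0sum
    exact zero_ne_one h0sum
  have htot : ∑' k, f k = 1 := by
    rw [← ENNReal.ofReal_tsum_of_nonneg (fun k => (h0pos k).le) hsummable, h0sum,
      ENNReal.ofReal_one]
  set c : ℝ≥0∞ := ∑' t : {k : ℕ // k ≠ i₀}, f t.1 with hc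
  have hsplit : f i₀ + c = 1 := by
    rw [← htot, ENNReal.tsum_eq_add_tsum_ite (f := f) i₀]
    congr 1
    rw [hc]
    have h1 : (∑' t : {k // k ≠ i₀}, f t.1) = ∑' x, Set.indicator {k | k ≠ i₀} f x :=
      tsum_subtype {k | k ≠ i₀} f
    rw [h1]
    apply tsum_congr
    intro k
    by_cases h : k = i₀ <;> simp [Set.indicator_apply, h]
  have hfi0 : f i₀ ≠ 0 := (ENNReal.ofReal_pos.mpr (h0pos i₀)).ne'
  have hc1 : c < 1 := by
    have hceq : c = 1 - f i₀ :=
      ENNReal.eq_sub_of_add_eq ENNReal.ofReal_ne_top (by rw [add_comm]; exact hsplit)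
    rw [hceq]
    exact ENNReal.sub_lt_self ENNReal.one_ne_top one_ne_zero hfi0
  have hbound : ∀ N : ℕ, μ {x | ∀ n, x n ≠ i₀} ≤ c ^ N := by
    intro N
    set T := {k : ℕ // k ≠ i₀}
    set ext : (Fin N → T) → (ℕ → ℕ) := fun y i => if h : i < N then (y ⟨i, h⟩).1 else 0 with hext
    have hsub : ({x | ∀ n, x n ≠ i₀} : Set (ℕ → ℕ)) ⊆
        ⋃ y : Fin N → T, {x | ∀ i ∈ Finset.range N, x i = ext y i} := by
      intro x hx
      simp only [Set.mem_setOf_eq] at hx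
      rw [Set.mem_iUnion]
      refine ⟨(fun i => ⟨x i.1, hx i.1⟩ : Fin N → T), ?_⟩
      intro i hi
      simp only [hext]
      rw [dif_pos (Finset.mem_range.mp hi)]
    calc μ {x | ∀ n, x n ≠ i₀}
        ≤ ∑' y : Fin N → T, μ {x | ∀ i ∈ Finset.range N, x i = ext y i} :=
          (measure_mono hsub).trans (measure_iUnion_le _)
      _ = ∑' y : Fin N → T, ∏ i : Fin N, f ((y i).1) := by
          apply tsum_congr
          intro y
          rw [hP (Finset.range N) (ext y), ← Fin.prod_univ_eq_prod_range (fun i => f (ext y i)) N]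
          apply Finset.prod_congr rfl
          intro i _
          simp only [hext]
          rw [dif_pos i.2]
      _ = c ^ N := tsum_pi_prod (fun t : T => f t.1) N
  have htend : Tendsto (fun N => c ^ N) atTop (𝓝 0) :=
    ENNReal.tendsto_pow_atTop_nhds_zero_of_lt_one hc1
  have := ge_of_tendsto htend (Filter.Eventually.of_forall hbound)
  exact le_antisymm this zero_le

theorem stmt15 (m : ℕ) (q : Fin (m + 1) → ℝ) (θs : Fin (m + 1) → (ℕ → ℝ))
    (hq : ∀ j, 0 < q j) (hqs : ∑ j, q j = 1)
    (hθmem : ∀ j i, 0 ≤ θs j i ∧ θs j i ≤ 1) (hθsum : ∀ j, ∑' i, θs j i = 1)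
    (hθ1 : ∀ i, 0 < θs 0 i)
    (hθz : ∀ j : Fin (m + 1), j ≠ 0 → ∃ i, θs j i = 0)
    (P : (ℕ → ℝ) → Measure (ℕ → ℕ))
    (hP : ∀ θ : ℕ → ℝ, (∀ i, 0 ≤ θ i) → ∑' i, θ i = 1 →
      ∀ (s : Finset ℕ) (y : ℕ → ℕ),
        P θ {x | ∀ i ∈ s, x i = y i} = ∏ i ∈ s, ENNReal.ofReal (θ (y i)))
    (θ₀ : ℕ → ℝ) (h0pos : ∀ i, 0 < θ₀ i) (h0le : ∀ i, θ₀ i ≤ 1) (h0sum : ∑' i, θ₀ i = 1) :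
    ∀ᵐ x ∂(P θ₀), ∀ g : BoundedContinuousFunction (ℕ → ℝ) ℝ,
      Tendsto (fun n => ∫ θ', g θ' ∂(postMix m q θs P x n)) atTop (𝓝 (g (θs 0))) := by
  classical
  set v : Fin (m + 1) → ℕ := fun j => if h : j = 0 then 0 else (hθz j h).choose with hv
  have hμ := hP θ₀ (fun i => (h0pos i).le) h0sum
  have hae : ∀ᵐ x ∂(P θ₀), ∀ j : Fin (m + 1), ∃ n, x n = v j := by
    rw [MeasureTheory.ae_all_iff]
    intro j
    have h0 : P θ₀ {x | ∀ n, x n ≠ v j} = 0 :=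
      avoid_null (P θ₀) θ₀ h0pos h0sum hμ (v j)
    rw [MeasureTheory.ae_iff]
    have he : {x : ℕ → ℕ | ¬∃ n, x n = v j} = {x | ∀ n, x n ≠ v j} := by
      ext x; simp [not_exists]
    rw [he]; exact h0
  filter_upwards [hae] with x hx g
  set N := (Finset.univ.sup fun j : Fin (m + 1) => (hx j).choose) + 1 with hN
  have key : ∀ n, N ≤ n → (∫ θ', g θ' ∂(postMix m q θs P x n)) = g (θs 0) := by
    intro n hn
    have hcyl : cyl x n = {y | ∀ i ∈ Finset.range n, y i = x i} := by
      ext y; simp [cyl, Finset.mem_range]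
    have hPj : ∀ j : Fin (m + 1), j ≠ 0 → P (θs j) (cyl x n) = 0 := by
      intro j hj
      rw [hcyl, hP (θs j) (fun i => (hθmem j i).1) (hθsum j)]
      apply Finset.prod_eq_zero (i := (hx j).choose)
      · rw [Finset.mem_range]
        calc (hx j).choose ≤ Finset.univ.sup fun j => (hx j).choose :=
              Finset.le_sup (f := fun j => (hx j).choose) (Finset.mem_univ j)
          _ < N := Nat.lt_succ_self _
          _ ≤ n := hn
      · rw [(hx j).choose_spec, hv]
        simp only [dif_neg hj]
        rw [(hθz j hj).choose_spec, ENNReal.ofReal_zero]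
    have hP0 : P (θs 0) (cyl x n) = ∏ i ∈ Finset.range n, ENNReal.ofReal (θs 0 (x i)) := by
      rw [hcyl, hP (θs 0) (fun i => (hθmem 0 i).1) (hθsum 0)]
    set c0 := ENNReal.ofReal (q 0) * P (θs 0) (cyl x n) with hc0
    have hc0pos : c0 ≠ 0 := by
      rw [hc0, hP0]
      exact mul_ne_zero (ENNReal.ofReal_pos.mpr (hq 0)).ne'
        (Finset.prod_ne_zero_iff.mpr fun i _ => (ENNReal.ofReal_pos.mpr (hθ1 (x i))).ne')
    have hc0top : c0 ≠ ⊤ := by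
      rw [hc0, hP0]
      exact ENNReal.mul_ne_top ENNReal.ofReal_ne_top
        (ENNReal.prod_lt_top fun i _ => ENNReal.ofReal_lt_top).ne
    have hsum : (∑ j, ENNReal.ofReal (q j) * P (θs j) (cyl x n)) = c0 := by
      rw [Finset.sum_eq_single 0]
      · intro j _ hj; rw [hPj j hj, mul_zero]
      · intro h; exact absurd (Finset.mem_univ _) h
    have hmeas : postMix m q θs P x n = Measure.dirac (θs 0) := by
      rw [postMix, hsum]
      have hms : (Measure.sum fun j : Fin (m + 1) =>
          (ENNReal.ofReal (q j) * P (θs j) (cyl x n)) • Measure.dirac (θs j)) =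
          c0 • Measure.dirac (θs 0) := by
        rw [Measure.sum_fintype, Finset.sum_eq_single 0]
        · intro j _ hj; rw [hPj j hj, mul_zero, zero_smul]
        · intro h; exact absurd (Finset.mem_univ _) h
      rw [hms, smul_smul, ENNReal.inv_mul_cancel hc0pos hc0top, one_smul]
    rw [hmeas, integral_dirac]
  apply Tendsto.congr' _ tendsto_const_nhds
  filter_upwards [eventually_ge_atTop N] with n hn
  exact (key n hn).symm
end

section
/- Let p be a probability measure on [0,1], P_θ the Bernoulli(θ) product measure on 2^ℕ, μ the joint distribution, and for n ≥ 1 let Uₙ = {(θ,x) : |f_{n²}(x) − θ| > ηₙ} where ηₙ ∈ ((n+1)^{−1/3}, n^{−1/3}) and f_m is the empirical mean of the first m bits. Then μ(Uₙ) ≤ ∛4 · n^{−4/3} · (α − β), and consequently ∑ₙ μ(Uₙ) < ∞, so μ-a.e. (θ,x) lies in only finitely many Uₙ. -/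
open MeasureTheory ProbabilityTheory
open scoped ENNReal
set_option linter.unusedSectionVars false

section Aux
variable (ν : Measure (ℕ → Bool)) [IsProbabilityMeasure ν] (θ : ℝ)
  (h0 : 0 ≤ θ) (h1 : θ ≤ 1)
  (hA : ∀ i : ℕ, ν {x | x i = true} = ENNReal.ofReal θ)
  (hAB : ∀ i j : ℕ, i ≠ j → ν {x | x i = true ∧ x j = true} = ENNReal.ofReal (θ * θ))

noncomputable def Xf (i : ℕ) : (ℕ → Bool) → ℝ := fun x => if x i then 1 else 0

lemma measA (i : ℕ) : MeasurableSet {x : ℕ → Bool | x i = true} := by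
  have : {x : ℕ → Bool | x i = true} = (fun x : ℕ → Bool => x i) ⁻¹' {true} := by ext x; simp
  rw [this]; exact (measurable_pi_apply i) (MeasurableSet.singleton true)

lemma measAB (i j : ℕ) : MeasurableSet {x : ℕ → Bool | x i = true ∧ x j = true} := by
  have : {x : ℕ → Bool | x i = true ∧ x j = true}
      = {x | x i = true} ∩ {x | x j = true} := rfl
  rw [this]; exact (measA i).inter (measA j)


lemma Xf_mul (i j : ℕ) (x : ℕ → Bool) :
    Xf i x * Xf j x = Set.indicator {x : ℕ → Bool | x i = true ∧ x j = true} (fun _ => (1:ℝ)) x := by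
  by_cases hi : x i <;> by_cases hj : x j <;> simp [Xf, Set.indicator, hi, hj]

lemma Xf_eq_indicator (i : ℕ) (x : ℕ → Bool) :
    Xf i x = Set.indicator {x : ℕ → Bool | x i = true} (fun _ => (1:ℝ)) x := by
  by_cases hi : x i <;> simp [Xf, Set.indicator, hi]

include hA h0 in
lemma integral_Xf (i : ℕ) : ∫ x, Xf i x ∂ν = θ := by
  have : ∫ x, Xf i x ∂ν = ∫ x, Set.indicator {x : ℕ → Bool | x i = true} (fun _ => (1:ℝ)) x ∂ν := by
    congr 1; ext x; exact Xf_eq_indicator i x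
  rw [this, integral_indicator_const _ (measA i), measureReal_def, hA i]
  simp [ENNReal.toReal_ofReal h0]

lemma integrable_Xf_mul (i j : ℕ) : Integrable (fun x => Xf i x * Xf j x) ν := by
  have : (fun x => Xf i x * Xf j x)
      = Set.indicator {x : ℕ → Bool | x i = true ∧ x j = true} (fun _ => (1:ℝ)) := by
    ext x; exact Xf_mul i j x
  rw [this]
  exact (integrable_const 1).indicator (measAB i j)

lemma integrable_Xf (i : ℕ) : Integrable (Xf i) ν := by
  have : Xf i = Set.indicator {x : ℕ → Bool | x i = true} (fun _ => (1:ℝ)) := by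
    ext x; exact Xf_eq_indicator i x
  rw [this]
  exact (integrable_const 1).indicator (measA i)

include hA h0 in
lemma integral_Xf_mul_self (i : ℕ) : ∫ x, Xf i x * Xf i x ∂ν = θ := by
  have : ∀ x, Xf i x * Xf i x = Xf i x := by
    intro x; simp only [Xf]; by_cases hi : x i <;> simp [hi]
  simp_rw [this]; exact integral_Xf ν θ h0 hA i

include hAB h0 in
lemma integral_Xf_mul (i j : ℕ) (hij : i ≠ j) : ∫ x, Xf i x * Xf j x ∂ν = θ * θ := by
  have : ∫ x, Xf i x * Xf j x ∂ν
      = ∫ x, Set.indicator {x : ℕ → Bool | x i = true ∧ x j = true} (fun _ => (1:ℝ)) x ∂ν := by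
    congr 1; ext x; exact Xf_mul i j x
  rw [this, integral_indicator_const _ (measAB i j), measureReal_def, hAB i j hij]
  simp [ENNReal.toReal_ofReal (mul_nonneg h0 h0)]

end Aux

section Moment
variable (ν : Measure (ℕ → Bool)) [IsProbabilityMeasure ν] (θ : ℝ)
  (h0 : 0 ≤ θ) (h1 : θ ≤ 1)
  (hA : ∀ i : ℕ, ν {x | x i = true} = ENNReal.ofReal θ)
  (hAB : ∀ i j : ℕ, i ≠ j → ν {x | x i = true ∧ x j = true} = ENNReal.ofReal (θ * θ))

include h0 hA hAB in
lemma integral_sq (m : ℕ) :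
    ∫ x, (∑ i ∈ Finset.range m, Xf i x - m * θ) ^ 2 ∂ν = m * θ * (1 - θ) := by
  have hint : ∀ i j : ℕ, Integrable (fun x => Xf i x * Xf j x) ν := integrable_Xf_mul ν
  have hintS : Integrable (fun x => ∑ i ∈ Finset.range m, Xf i x) ν :=
    integrable_finset_sum _ (fun i _ => integrable_Xf ν i)
  have hintSS : Integrable (fun x => (∑ i ∈ Finset.range m, Xf i x) * (∑ j ∈ Finset.range m, Xf j x)) ν := by
    have : (fun x => (∑ i ∈ Finset.range m, Xf i x) * (∑ j ∈ Finset.range m, Xf j x))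
        = fun x => ∑ i ∈ Finset.range m, ∑ j ∈ Finset.range m, Xf i x * Xf j x := by
      ext x; rw [Finset.sum_mul_sum]
    rw [this]
    exact integrable_finset_sum _ (fun i _ =>
      integrable_finset_sum _ (fun j _ => hint i j))
  have hS : ∫ x, ∑ i ∈ Finset.range m, Xf i x ∂ν = m * θ := by
    rw [integral_finset_sum _ (fun i _ => integrable_Xf ν i)]
    simp [integral_Xf ν θ h0 hA]
  have hSS : ∫ x, (∑ i ∈ Finset.range m, Xf i x) * (∑ j ∈ Finset.range m, Xf j x) ∂ν
      = m * θ + (m * m - m) * (θ * θ) := by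
    have e1 : (fun x => (∑ i ∈ Finset.range m, Xf i x) * (∑ j ∈ Finset.range m, Xf j x))
        = fun x => ∑ i ∈ Finset.range m, ∑ j ∈ Finset.range m, Xf i x * Xf j x := by
      ext x; rw [Finset.sum_mul_sum]
    rw [e1, integral_finset_sum _ (fun i _ =>
      integrable_finset_sum _ (fun j _ => hint i j))]
    have e2 : ∀ i ∈ Finset.range m,
        ∫ x, ∑ j ∈ Finset.range m, Xf i x * Xf j x ∂ν = θ + (m - 1) * (θ * θ) := by
      intro i hi
      rw [integral_finset_sum _ (fun j _ => hint i j)]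
      have e3 : ∀ j ∈ Finset.range m, ∫ x, Xf i x * Xf j x ∂ν
          = (θ * θ) + (if j = i then θ - θ * θ else 0) := by
        intro j _
        by_cases hij : i = j
        · subst hij; rw [integral_Xf_mul_self ν θ h0 hA]; simp
        · rw [integral_Xf_mul ν θ h0 hAB i j hij, if_neg (Ne.symm hij)]; ring
      rw [Finset.sum_congr rfl e3, Finset.sum_add_distrib, Finset.sum_const,
        Finset.sum_ite_eq' (Finset.range m) i (fun _ => θ - θ * θ), if_pos hi,
        Finset.card_range]
      push_cast
      have hm : (1:ℝ) ≤ m := by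
        have := Finset.mem_range.mp hi; exact_mod_cast Nat.one_le_iff_ne_zero.mpr (by omega)
      ring
    rw [Finset.sum_congr rfl e2, Finset.sum_const, Finset.card_range]
    push_cast
    ring
  have expand : ∀ x : ℕ → Bool, (∑ i ∈ Finset.range m, Xf i x - m * θ) ^ 2
      = (∑ i ∈ Finset.range m, Xf i x) * (∑ j ∈ Finset.range m, Xf j x)
        - (2 * (m * θ)) * (∑ i ∈ Finset.range m, Xf i x) + (m * θ) ^ 2 := by
    intro x; ring
  simp_rw [expand]
  have hI : Integrable (fun x => (∑ i ∈ Finset.range m, Xf i x) * (∑ i ∈ Finset.range m, Xf i x)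
      - 2 * (m * θ) * ∑ i ∈ Finset.range m, Xf i x) ν := hintSS.sub (hintS.const_mul _)
  rw [integral_add hI (integrable_const _),
    integral_sub hintSS (hintS.const_mul _), integral_const_mul, hS, hSS]
  simp
  ring

end Moment

section Cheb
variable (ν : Measure (ℕ → Bool)) [IsProbabilityMeasure ν] (θ : ℝ)
  (h0 : 0 ≤ θ) (h1 : θ ≤ 1)
  (hA : ∀ i : ℕ, ν {x | x i = true} = ENNReal.ofReal θ)
  (hAB : ∀ i j : ℕ, i ≠ j → ν {x | x i = true ∧ x j = true} = ENNReal.ofReal (θ * θ))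

lemma measurable_Xf (i : ℕ) : Measurable (Xf i) := by
  have : Xf i = Set.indicator {x : ℕ → Bool | x i = true} (fun _ => (1:ℝ)) := by
    ext x; exact Xf_eq_indicator i x
  rw [this]
  exact measurable_const.indicator (measA i)

include h0 hA hAB in
lemma cheb (m : ℕ) (hm : 1 ≤ m) (ε : ℝ) (hε : 0 < ε) :
    ν {x | ε < |(∑ i ∈ Finset.range m, Xf i x) / m - θ|}
      ≤ ENNReal.ofReal (θ * (1 - θ) / (m * ε ^ 2)) := by
  set S : (ℕ → Bool) → ℝ := fun x => ∑ i ∈ Finset.range m, Xf i x with hSdef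
  have hmpos : (0:ℝ) < m := by exact_mod_cast hm
  have hmeasS : Measurable S := Finset.measurable_sum _ (fun i _ => measurable_Xf i)
  set g : (ℕ → Bool) → ℝ≥0∞ := fun x => ENNReal.ofReal ((S x - m * θ) ^ 2) with hgdef
  have hmeasg : Measurable g :=
    ENNReal.measurable_ofReal.comp (((hmeasS.sub measurable_const).pow measurable_const))
  have hsub : {x | ε < |S x / m - θ|} ⊆ {x | ENNReal.ofReal ((m * ε) ^ 2) ≤ g x} := by
    intro x hx
    simp only [Set.mem_setOf_eq] at hx ⊢
    apply ENNReal.ofReal_le_ofReal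
    have h1 : m * ε < |S x - m * θ| := by
      have : |S x - m * θ| = m * |S x / m - θ| := by
        rw [abs_sub_comm, show (m:ℝ) * θ - S x = m * (θ - S x / m) by field_simp,
          abs_mul, abs_of_pos hmpos, abs_sub_comm]
      rw [this]
      exact (mul_lt_mul_iff_right₀ hmpos).mpr hx
    calc (m * ε) ^ 2 ≤ |S x - m * θ| ^ 2 := by
          apply pow_le_pow_left₀ (by positivity) h1.le
      _ = (S x - m * θ) ^ 2 := sq_abs _
  have hintXf : ∀ i j : ℕ, Integrable (fun x => Xf i x * Xf j x) ν := integrable_Xf_mul ν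
  have hintS : Integrable S ν := integrable_finset_sum _ (fun i _ => integrable_Xf ν i)
  have hintSq : Integrable (fun x => (S x - m * θ) ^ 2) ν := by
    have hintSS : Integrable (fun x => S x * S x) ν := by
      have : (fun x => S x * S x)
          = fun x => ∑ i ∈ Finset.range m, ∑ j ∈ Finset.range m, Xf i x * Xf j x := by
        ext x; simp only [hSdef]; rw [Finset.sum_mul_sum]
      rw [this]
      exact integrable_finset_sum _ (fun i _ =>
        integrable_finset_sum _ (fun j _ => hintXf i j))
    have : (fun x => (S x - m * θ) ^ 2)
        = fun x => S x * S x - 2 * (m * θ) * S x + (m * θ) ^ 2 := by ext x; ring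
    rw [this]
    exact (hintSS.sub (hintS.const_mul _)).add (integrable_const _)
  have hlin : ∫⁻ x, g x ∂ν = ENNReal.ofReal (m * θ * (1 - θ)) := by
    rw [← ofReal_integral_eq_lintegral_ofReal hintSq (Filter.Eventually.of_forall fun x => sq_nonneg _)]
    congr 1
    exact integral_sq ν θ h0 hA hAB m
  have key := mul_meas_ge_le_lintegral₀ (μ := ν) hmeasg.aemeasurable (ENNReal.ofReal ((m * ε) ^ 2))
  have hεpos : (0:ℝ) < (m * ε) ^ 2 := by positivity
  have hne0 : ENNReal.ofReal ((m * ε) ^ 2) ≠ 0 := by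
    simp [ENNReal.ofReal_eq_zero, not_le, hεpos]; exact ⟨by omega, hε.ne'⟩
  have hnetop : ENNReal.ofReal ((m * ε) ^ 2) ≠ ⊤ := ENNReal.ofReal_ne_top
  show ν {x | ε < |S x / (m:ℝ) - θ|} ≤ ENNReal.ofReal (θ * (1 - θ) / (m * ε ^ 2))
  calc ν {x | ε < |S x / m - θ|}
      ≤ ν {x | ENNReal.ofReal ((m * ε) ^ 2) ≤ g x} := measure_mono hsub
    _ ≤ (∫⁻ x, g x ∂ν) / ENNReal.ofReal ((m * ε) ^ 2) := by
        rw [ENNReal.le_div_iff_mul_le (Or.inl hne0) (Or.inl hnetop), mul_comm]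
        exact key
    _ = ENNReal.ofReal (m * θ * (1 - θ)) / ENNReal.ofReal ((m * ε) ^ 2) := by rw [hlin]
    _ = ENNReal.ofReal (m * θ * (1 - θ) / (m * ε) ^ 2) :=
        (ENNReal.ofReal_div_of_pos hεpos).symm
    _ = ENNReal.ofReal (θ * (1 - θ) / (m * ε ^ 2)) := by
        congr 1
        field_simp

end Cheb

lemma rbound (n : ℕ) (hn : 1 ≤ n) (e : ℝ) (he : ((n:ℝ)+1)^(-(1:ℝ)/3) < e) (C : ℝ) (hC : 0 ≤ C) :
    C / ((n:ℝ)^2 * e^2) ≤ 4^((1:ℝ)/3) * (n:ℝ)^(-(4:ℝ)/3) * C := by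
  set N : ℝ := (n:ℝ) with hN
  have hN1 : (1:ℝ) ≤ N := by rw [hN]; exact_mod_cast hn
  have hNpos : (0:ℝ) < N := by linarith
  have he0 : 0 < e := lt_trans (Real.rpow_pos_of_pos (by linarith) _) he
  have h1 : (N+1)^(-(2:ℝ)/3) ≤ e^2 := by
    have step : ((N+1)^(-(1:ℝ)/3))^2 ≤ e^2 :=
      pow_le_pow_left₀ (Real.rpow_nonneg (by linarith) _) he.le 2
    calc (N+1)^(-(2:ℝ)/3) = ((N+1)^(-(1:ℝ)/3))^2 := by
          rw [← Real.rpow_natCast ((N+1)^(-(1:ℝ)/3)) 2, ← Real.rpow_mul (by linarith)]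
          norm_num
      _ ≤ e^2 := step
  have hb0 : (0:ℝ) < (N+1)^(-(2:ℝ)/3) := Real.rpow_pos_of_pos (by linarith) _
  have h2 : C / (N^2 * e^2) ≤ C / (N^2 * (N+1)^(-(2:ℝ)/3)) := by
    apply div_le_div_of_nonneg_left hC (by positivity)
    gcongr
  have h3 : C / (N^2 * (N+1)^(-(2:ℝ)/3)) = C * (N+1)^((2:ℝ)/3) / N^2 := by
    rw [show (-(2:ℝ)/3) = -((2:ℝ)/3) by norm_num, Real.rpow_neg (by linarith)]
    field_simp
  have h4 : (N+1)^((2:ℝ)/3) ≤ 2^((2:ℝ)/3) * N^((2:ℝ)/3) := by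
    rw [← Real.mul_rpow (by norm_num) (by linarith)]
    exact Real.rpow_le_rpow (by linarith) (by linarith) (by norm_num)
  have h5 : N^((2:ℝ)/3) / N^2 = N^(-(4:ℝ)/3) := by
    rw [← Real.rpow_natCast N 2, ← Real.rpow_sub hNpos]
    norm_num
  have h6 : (4:ℝ)^((1:ℝ)/3) = 2^((2:ℝ)/3) := by
    rw [show (4:ℝ) = (2:ℝ)^(2:ℝ) by norm_num [Real.rpow_natCast], ← Real.rpow_mul (by norm_num)]
    norm_num
  calc C / (N^2 * e^2) ≤ C / (N^2 * (N+1)^(-(2:ℝ)/3)) := h2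
    _ = C * (N+1)^((2:ℝ)/3) / N^2 := h3
    _ ≤ C * (2^((2:ℝ)/3) * N^((2:ℝ)/3)) / N^2 := by gcongr
    _ = 2^((2:ℝ)/3) * (N^((2:ℝ)/3) / N^2) * C := by ring
    _ = 4^((1:ℝ)/3) * N^(-(4:ℝ)/3) * C := by rw [h5, h6]

set_option maxHeartbeats 1000000 in
theorem stmt18
    (p : Measure (Set.Icc (0:ℝ) 1)) [IsProbabilityMeasure p]
    (P : Kernel (Set.Icc (0:ℝ) 1) (ℕ → Bool)) [IsMarkovKernel P]
    (hP : ∀ (θ : Set.Icc (0:ℝ) 1) (s : Finset ℕ) (y : ℕ → Bool),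
      P θ {x | ∀ i ∈ s, x i = y i}
        = ∏ i ∈ s, if y i then ENNReal.ofReal (θ : ℝ) else ENNReal.ofReal (1 - (θ : ℝ)))
    (α β : ℝ) (hα : α = ∫ θ, (θ : ℝ) ∂p) (hβ : β = ∫ θ, (θ : ℝ) ^ 2 ∂p)
    (f : ℕ → (ℕ → Bool) → ℝ)
    (hf : ∀ n x, f n x = (∑ i ∈ Finset.range n, if x i then (1:ℝ) else 0) / n)
    (η : ℕ → ℝ)
    (hη : ∀ n : ℕ, 1 ≤ n →
      ((n : ℝ) + 1) ^ (-(1:ℝ)/3) < η n ∧ η n < (n : ℝ) ^ (-(1:ℝ)/3))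
    (U : ℕ → Set ((Set.Icc (0:ℝ) 1) × (ℕ → Bool)))
    (hU : ∀ n, U n = {z | η n < |f (n ^ 2) z.2 - (z.1 : ℝ)|}) :
    (∀ n : ℕ, 1 ≤ n →
      (p ⊗ₘ P) (U n) ≤ ENNReal.ofReal ((4:ℝ) ^ ((1:ℝ)/3) * (n : ℝ) ^ (-(4:ℝ)/3) * (α - β))) ∧
    (∑' n, (p ⊗ₘ P) (U (n + 1))) ≠ ⊤ ∧
    (∀ᵐ z ∂(p ⊗ₘ P), {n | z ∈ U n}.Finite) := by
  -- coordinate measures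
  have hA : ∀ (θ : Set.Icc (0:ℝ) 1) (i : ℕ),
      P θ {x | x i = true} = ENNReal.ofReal (θ:ℝ) := by
    intro θ i
    have := hP θ {i} (fun _ => true)
    simpa using this
  have hAB : ∀ (θ : Set.Icc (0:ℝ) 1) (i j : ℕ), i ≠ j →
      P θ {x | x i = true ∧ x j = true} = ENNReal.ofReal ((θ:ℝ) * (θ:ℝ)) := by
    intro θ i j hij
    have h := hP θ {i, j} (fun _ => true)
    have hset : {x : ℕ → Bool | ∀ k ∈ ({i, j} : Finset ℕ), x k = true}
        = {x | x i = true ∧ x j = true} := by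
      ext x
      simp only [Set.mem_setOf_eq, Finset.mem_insert, Finset.mem_singleton]
      constructor
      · intro h; exact ⟨h i (Or.inl rfl), h j (Or.inr rfl)⟩
      · rintro ⟨h1, h2⟩ k hk
        rcases hk with rfl | rfl
        · exact h1
        · exact h2
    rw [hset, Finset.prod_pair hij] at h
    simpa [← ENNReal.ofReal_mul θ.2.1] using h
  -- measurability
  have hfm : ∀ m : ℕ, Measurable (f m) := by
    intro m
    have : f m = fun x => (∑ i ∈ Finset.range m, Xf i x) / m := by
      ext x; rw [hf]; rfl
    rw [this]
    exact (Finset.measurable_sum _ (fun i _ => measurable_Xf i)).div_const _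
  have hmeasU : ∀ n, MeasurableSet (U n) := by
    intro n
    rw [hU]
    exact measurableSet_lt measurable_const
      (((hfm (n^2)).comp measurable_snd).sub
        (measurable_subtype_coe.comp measurable_fst)).abs
  -- integrability on the parameter space
  have intθ : Integrable (fun θ : Set.Icc (0:ℝ) 1 => (θ:ℝ)) p := by
    apply Integrable.mono' (integrable_const (1:ℝ))
      continuous_subtype_val.aestronglyMeasurable
    filter_upwards with θ
    rw [Real.norm_eq_abs, abs_of_nonneg θ.2.1]; exact θ.2.2
  have intθ2 : Integrable (fun θ : Set.Icc (0:ℝ) 1 => (θ:ℝ)^2) p := by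
    apply Integrable.mono' (integrable_const (1:ℝ))
      ((continuous_subtype_val.pow 2).aestronglyMeasurable)
    filter_upwards with θ
    rw [Pi.pow_apply, Real.norm_eq_abs, abs_of_nonneg (by positivity)]
    nlinarith [θ.2.1, θ.2.2]
  have hABnonneg : 0 ≤ α - β := by
    rw [hα, hβ, ← integral_sub intθ intθ2]
    apply integral_nonneg
    intro θ
    show (0:ℝ) ≤ (θ:ℝ) - (θ:ℝ)^2
    nlinarith [θ.2.1, θ.2.2]
  -- per-n bound
  have key : ∀ n : ℕ, 1 ≤ n →
      (p ⊗ₘ P) (U n) ≤ ENNReal.ofReal ((4:ℝ) ^ ((1:ℝ)/3) * (n : ℝ) ^ (-(4:ℝ)/3) * (α - β)) := by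
    intro n hn
    have hηpos : 0 < η n :=
      lt_trans (Real.rpow_pos_of_pos (by positivity) _) (hη n hn).1
    have hm1 : 1 ≤ n^2 := Nat.one_le_pow _ _ (by omega)
    have hmR : (0:ℝ) < ((n^2 : ℕ) : ℝ) := by exact_mod_cast hm1
    have hcpos : (0:ℝ) < ((n^2 : ℕ) : ℝ) * (η n)^2 := by positivity
    have sect : ∀ θ : Set.Icc (0:ℝ) 1, Prod.mk θ ⁻¹' U n
        = {x | η n < |(∑ i ∈ Finset.range (n^2), Xf i x) / ((n^2 : ℕ) : ℝ) - (θ:ℝ)|} := by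
      intro θ
      rw [hU]
      ext x
      simp only [Set.mem_preimage, Set.mem_setOf_eq]
      rw [hf]
      rfl
    rw [Measure.compProd_apply (hmeasU n)]
    have step1 : ∫⁻ θ, P θ (Prod.mk θ ⁻¹' U n) ∂p
        ≤ ∫⁻ θ, ENNReal.ofReal ((θ:ℝ) * (1 - (θ:ℝ)) / (((n^2 : ℕ) : ℝ) * (η n)^2)) ∂p := by
      apply lintegral_mono
      intro θ
      show P θ (Prod.mk θ ⁻¹' U n)
          ≤ ENNReal.ofReal ((θ:ℝ) * (1 - (θ:ℝ)) / (((n^2 : ℕ) : ℝ) * (η n)^2))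
      rw [sect θ]
      exact cheb (P θ) (θ:ℝ) θ.2.1 (hA θ) (hAB θ) (n^2) hm1 (η n) hηpos
    have step2 : ∫⁻ θ, ENNReal.ofReal ((θ:ℝ) * (1 - (θ:ℝ)) / (((n^2 : ℕ) : ℝ) * (η n)^2)) ∂p
        = ENNReal.ofReal ((α - β) / (((n^2 : ℕ) : ℝ) * (η n)^2)) := by
      rw [← ofReal_integral_eq_lintegral_ofReal
        (((intθ.sub intθ2).div_const (((n^2 : ℕ) : ℝ) * (η n)^2)).congr (by
          filter_upwards with θ
          simp only [Pi.sub_apply]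
          ring))
        (Filter.Eventually.of_forall (fun θ => by
          have h1 := θ.2.1; have h2 := θ.2.2
          exact div_nonneg (mul_nonneg h1 (by linarith)) hcpos.le))]
      congr 1
      have e : (fun θ : Set.Icc (0:ℝ) 1 => (θ:ℝ) * (1 - (θ:ℝ)) / (((n^2 : ℕ) : ℝ) * (η n)^2))
          = fun θ : Set.Icc (0:ℝ) 1 => ((θ:ℝ) - (θ:ℝ)^2) / (((n^2 : ℕ) : ℝ) * (η n)^2) := by
        ext θ; ring
      rw [e, integral_div, integral_sub intθ intθ2, ← hα, ← hβ]
    have step3 : ENNReal.ofReal ((α - β) / (((n^2 : ℕ) : ℝ) * (η n)^2))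
        ≤ ENNReal.ofReal ((4:ℝ) ^ ((1:ℝ)/3) * (n : ℝ) ^ (-(4:ℝ)/3) * (α - β)) := by
      apply ENNReal.ofReal_le_ofReal
      have e2 : ((n^2 : ℕ) : ℝ) * (η n)^2 = (n:ℝ)^2 * (η n)^2 := by push_cast; ring
      rw [e2]
      exact rbound n hn (η n) (hη n hn).1 (α - β) hABnonneg
    exact le_trans step1 (le_trans (le_of_eq step2) step3)
  have hsum : Summable (fun k : ℕ =>
      (4:ℝ) ^ ((1:ℝ)/3) * ((k+1 : ℕ) : ℝ) ^ (-(4:ℝ)/3) * (α - β)) := by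
    apply Summable.mul_right
    apply Summable.mul_left
    exact (summable_nat_add_iff 1).mpr (Real.summable_nat_rpow.mpr (by norm_num))
  have hnn : ∀ k : ℕ, 0 ≤ (4:ℝ) ^ ((1:ℝ)/3) * ((k+1 : ℕ) : ℝ) ^ (-(4:ℝ)/3) * (α - β) := by
    intro k
    apply mul_nonneg (mul_nonneg (Real.rpow_nonneg (by norm_num) _)
      (Real.rpow_nonneg (by positivity) _)) hABnonneg
  have hle : ∑' k, (p ⊗ₘ P) (U (k + 1))
      ≤ ∑' k, ENNReal.ofReal ((4:ℝ) ^ ((1:ℝ)/3) * ((k+1 : ℕ) : ℝ) ^ (-(4:ℝ)/3) * (α - β)) :=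
    ENNReal.tsum_le_tsum (fun k => key (k+1) (by omega))
  rw [← ENNReal.ofReal_tsum_of_nonneg hnn hsum] at hle
  have htail : ∑' k, (p ⊗ₘ P) (U (k + 1)) ≠ ⊤ :=
    ne_top_of_le_ne_top ENNReal.ofReal_ne_top hle
  refine ⟨key, htail, ?_⟩
  have htot : ∑' n, (p ⊗ₘ P) (U n) ≠ ⊤ := by
    rw [tsum_eq_zero_add' ENNReal.summable]
    exact ENNReal.add_ne_top.mpr ⟨measure_ne_top _ _, htail⟩
  filter_upwards [ae_eventually_notMem htot] with z hz
  rcases Filter.eventually_atTop.mp hz with ⟨N, hN⟩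
  apply Set.Finite.subset (Set.finite_Iio N)
  intro k hk
  by_contra hkN
  exact (hN k (by simpa [Set.mem_Iio, not_lt] using hkN)) hk
end
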